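/- arXiv:2505.11602 — 2 statements merged into one kernel-verified Lean document; each statement's English description precedes it below -/
import Mathlib

section
/- Let Q be an N×N Hermitian positive semidefinite complex matrix, A an N×N complex matrix, B an N×d complex matrix, C a d×N complex matrix, β ≥ 0, and Q̇ an N×N Hermitian matrix. Suppose the (N+d)×(N+d) block Hermitian matrix L = [[Q̇ + QA + AᴴQ + 2βI, QB - Cᴴ], [BᴴQ - C, 0]] is negative semidefinite. Then for every vector v in the kernel of Q, we have C v = 0. -/
open Matrix ComplexOrder

/-- Kernel condition from the parametric passivity LMI: if the block matrix
`L = [[Q̇ + QA + AᴴQ + 2βI, QB - Cᴴ], [BᴴQ - C, 0]]` is negative semidefinite,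
then every `v ∈ ker Q` satisfies `C v = 0`. -/
theorem kernel_unobservable_of_lmi
    (N d : ℕ) (Q Qdot A : Matrix (Fin N) (Fin N) ℂ)
    (B : Matrix (Fin N) (Fin d) ℂ) (C : Matrix (Fin d) (Fin N) ℂ) (β : ℝ)
    (hQ : Q.PosSemidef) (hQdot : Qdot.IsHermitian) (hβ : 0 ≤ β)
    (hL : (-(Matrix.fromBlocks
        (Qdot + Q * A + Aᴴ * Q + ((2 * β : ℝ) : ℂ) • (1 : Matrix (Fin N) (Fin N) ℂ))
        (Q * B - Cᴴ) (Bᴴ * Q - C) (0 : Matrix (Fin d) (Fin d) ℂ))).PosSemidef) :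
    ∀ v : Fin N → ℂ, Q *ᵥ v = 0 → C *ᵥ v = 0 := by
  intro v hv
  set M := (-(Matrix.fromBlocks
        (Qdot + Q * A + Aᴴ * Q + ((2 * β : ℝ) : ℂ) • (1 : Matrix (Fin N) (Fin N) ℂ))
        (Q * B - Cᴴ) (Bᴴ * Q - C) (0 : Matrix (Fin d) (Fin d) ℂ))) with hM
  -- key: the top-right block must vanish (Q*B = Cᴴ)
  have key : Q * B - Cᴴ = 0 := by
    ext i j
    have hx : ∀ w : Fin d → ℂ, M *ᵥ (Sum.elim (0 : Fin N → ℂ) w) = 0 := by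
      intro w
      rw [← hL.dotProduct_mulVec_zero_iff]
      rw [hM, neg_mulVec, fromBlocks_mulVec]
      simp [dotProduct]
    have h0 := hx (Pi.single j 1)
    rw [hM, neg_mulVec, fromBlocks_mulVec, Sum.elim_comp_inl, Sum.elim_comp_inr] at h0
    have := congrFun h0 (Sum.inl i)
    simp [mulVec_single_one, mulVec_single, Matrix.sub_apply] at this
    simp only [Matrix.zero_apply, Matrix.sub_apply, conjTranspose_apply]
    exact sub_eq_zero.mpr (sub_eq_zero.mp this).symm
  -- hence C = Bᴴ * Q, so C v = Bᴴ (Q v) = 0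
  have hC : C = Bᴴ * Q := by
    have := congrArg conjTranspose (sub_eq_zero.mp key)
    simpa [conjTranspose_mul, hQ.isHermitian.eq] using this.symm
  rw [hC, ← mulVec_mulVec, hv, mulVec_zero]
end

section
/- Let h solve h'(t) = A(t)h(t) + B(t)u(t) on [t₀,∞) with A locally integrable and B, u locally square-integrable, and let Q : [t₀,∞) → (Hermitian N×N matrices) be locally absolutely continuous with k₁I ⪯ Q(t) ⪯ k₂I (0 < k₁ ≤ k₂). Suppose Q'(t) + Q(t)A(t) + A(t)ᴴQ(t) ⪯ -2δ Q(t) a.e. for some δ > 0, and ‖B(t)‖ ≤ M_B for a.e. t. Then V(t) := ½ h(t)ᴴQ(t)h(t) satisfies V'(t) ≤ -2δ V(t) + √(2/k₁) k₂ M_B ‖u(t)‖ √(V(t)) for almost every t. -/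
set_option maxHeartbeats 1000000


open Matrix ComplexOrder MeasureTheory

/-- The Euclidean norm of a complex vector, `‖v‖ = √(vᴴv)`. -/
noncomputable def euclNorm {n : ℕ} (v : Fin n → ℂ) : ℝ :=
  Real.sqrt (star v ⬝ᵥ v).re

section Aux

open Filter Set intervalIntegral
open scoped Topology

/-- Lebesgue differentiation: an interval integral of a locally integrable function
has the integrand as derivative at almost every point. -/
theorem ae_hasDerivAt_intervalIntegral {f : ℝ → ℂ}
    (hf : LocallyIntegrable f volume) (t₀ : ℝ) :
    ∀ᵐ t ∂(volume : Measure ℝ), HasDerivAt (fun x => ∫ s in t₀..x, f s) (f t) t := by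
  have hii : ∀ a b : ℝ, IntervalIntegrable f volume a b := fun a b =>
    intervalIntegrable_iff.2 ((hf.integrableOn_isCompact isCompact_uIcc).mono_set
      Set.Ioc_subset_Icc_self)
  filter_upwards [(IsUnifLocDoublingMeasure.vitaliFamily
    (volume : Measure ℝ) 1).ae_tendsto_average_norm_sub hf] with t ht
  have hR : Tendsto (fun y => ⨍ s in Icc t y, ‖f s - f t‖) (𝓝[>] t) (𝓝 0) :=
    ht.comp (Real.tendsto_Icc_vitaliFamily_right t)
  have hL : Tendsto (fun y => ⨍ s in Icc y t, ‖f s - f t‖) (𝓝[<] t) (𝓝 0) :=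
    ht.comp (Real.tendsto_Icc_vitaliFamily_left t)
  set F : ℝ → ℂ := fun x => ∫ s in t₀..x, f s with hF
  have bound : ∀ a b : ℝ, a < b →
      ‖(b - a)⁻¹ • (∫ s in a..b, f s) - (b-a)⁻¹ • ((b-a) • f t)‖
        ≤ ⨍ s in Icc a b, ‖f s - f t‖ := by
    intro a b hab
    rw [← smul_sub]
    have h1 : (∫ s in a..b, f s) - (b - a) • f t = ∫ s in a..b, (f s - f t) := by
      rw [intervalIntegral.integral_sub (hii a b) intervalIntegrable_const,
        intervalIntegral.integral_const]
    rw [h1, norm_smul, setAverage_eq]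
    have hv : volume.real (Icc a b) = b - a := by
      rw [measureReal_def, Real.volume_Icc, ENNReal.toReal_ofReal (by linarith)]
    rw [hv, smul_eq_mul, norm_inv, Real.norm_of_nonneg (by linarith : (0:ℝ) ≤ b - a)]
    have h2 : ‖∫ s in a..b, (f s - f t)‖ ≤ ∫ s in a..b, ‖f s - f t‖ :=
      intervalIntegral.norm_integral_le_integral_norm hab.le
    have h3 : (∫ s in a..b, ‖f s - f t‖) = ∫ s in Icc a b, ‖f s - f t‖ := by
      rw [intervalIntegral.integral_of_le hab.le, ← integral_Icc_eq_integral_Ioc]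
    calc (b - a)⁻¹ * ‖∫ s in a..b, (f s - f t)‖
        ≤ (b - a)⁻¹ * ∫ s in a..b, ‖f s - f t‖ :=
          mul_le_mul_of_nonneg_left h2 (inv_nonneg.2 (by linarith))
      _ = (b - a)⁻¹ * ∫ s in Icc a b, ‖f s - f t‖ := by rw [h3]
  rw [hasDerivAt_iff_tendsto_slope]
  rw [← nhdsLT_sup_nhdsGT, tendsto_sup]
  constructor
  · rw [← tendsto_sub_nhds_zero_iff]
    apply squeeze_zero_norm' ?_ hL
    filter_upwards [self_mem_nhdsWithin] with y (hy : y < t)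
    have hne : t - y ≠ 0 := sub_ne_zero.2 hy.ne'
    have hFt : F t - F y = ∫ s in y..t, f s := by
      rw [hF]; simp only
      rw [← intervalIntegral.integral_interval_sub_left (hii t₀ t) (hii t₀ y)]
    have heq : slope F t y - f t
        = (t - y)⁻¹ • (∫ s in y..t, f s) - (t - y)⁻¹ • ((t - y) • f t) := by
      rw [slope_def_module, ← hFt, smul_smul, inv_mul_cancel₀ hne, one_smul,
        ← neg_sub t y, ← neg_sub (F t) (F y), inv_neg, neg_smul, smul_neg, neg_neg]
    rw [heq]
    exact bound y t hy
  · rw [← tendsto_sub_nhds_zero_iff]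
    apply squeeze_zero_norm' ?_ hR
    filter_upwards [self_mem_nhdsWithin] with y (hy : t < y)
    have hne : y - t ≠ 0 := sub_ne_zero.2 hy.ne'
    have hFt : F y - F t = ∫ s in t..y, f s := by
      rw [hF]; simp only
      rw [← intervalIntegral.integral_interval_sub_left (hii t₀ y) (hii t₀ t)]
    have heq : slope F t y - f t
        = (y - t)⁻¹ • (∫ s in t..y, f s) - (y - t)⁻¹ • ((y - t) • f t) := by
      rw [slope_def_module, ← hFt, smul_smul, inv_mul_cancel₀ hne, one_smul]
    rw [heq]
    exact bound t y hy

/-- FTC-form solutions are differentiable a.e. on `[t₀, ∞)` with the expected derivative. -/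
theorem ae_hasDerivAt_of_ftc (t₀ : ℝ) (g f : ℝ → ℂ)
    (hint : ∀ t, t₀ ≤ t → IntervalIntegrable f volume t₀ t)
    (hftc : ∀ t, t₀ ≤ t → g t = g t₀ + ∫ s in t₀..t, f s) :
    ∀ᵐ t ∂(volume.restrict (Set.Ici t₀)), HasDerivAt g (f t) t := by
  set ft : ℝ → ℂ := Set.indicator (Set.Ici t₀) f with hft
  have hloc : LocallyIntegrable ft volume := by
    rw [locallyIntegrable_iff]
    intro K hK
    obtain ⟨r, hr⟩ := hK.isBounded.subset_closedBall 0
    have h1 : IntegrableOn f (Set.Icc t₀ (max t₀ r)) volume := by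
      rw [← intervalIntegrable_iff_integrableOn_Icc_of_le (le_max_left _ _)]
      exact hint _ (le_max_left _ _)
    have hsub : Set.Ici t₀ ∩ K ⊆ Set.Icc t₀ (max t₀ r) := by
      rintro x ⟨hx1, hx2⟩
      have := hr hx2
      rw [Real.closedBall_eq_Icc] at this
      exact ⟨hx1, le_max_of_le_right (by linarith [this.2])⟩
    rw [IntegrableOn, hft, integrable_indicator_iff measurableSet_Ici, IntegrableOn,
      Measure.restrict_restrict measurableSet_Ici]
    exact h1.mono_set hsub
  have hae := ae_hasDerivAt_intervalIntegral hloc t₀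
  rw [← Measure.restrict_congr_set Ioi_ae_eq_Ici]
  filter_upwards [ae_restrict_of_ae hae, ae_restrict_mem measurableSet_Ioi] with t ht htIoi
  have hteq : ∀ x : ℝ, t₀ ≤ x → g x = g t₀ + ∫ s in t₀..x, ft s := by
    intro x hx
    rw [hftc x hx]
    congr 1
    refine intervalIntegral.integral_congr fun s hs => ?_
    rw [Set.uIcc_of_le hx] at hs
    rw [hft, Set.indicator_of_mem (Set.mem_Ici.2 hs.1)]
  have hev : (fun x => g t₀ + ∫ s in t₀..x, ft s) =ᶠ[nhds t] g := by
    filter_upwards [Ioi_mem_nhds htIoi] with x (hx : t₀ < x) using (hteq x hx.le).symm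
  have hd : HasDerivAt (fun x => g t₀ + ∫ s in t₀..x, ft s) (ft t) t := ht.const_add _
  have h2 := hd.congr_of_eventuallyEq hev.symm
  rwa [hft, Set.indicator_of_mem (Set.mem_Ici.2 (le_of_lt htIoi))] at h2

lemma re_dot_nonneg_of_psd {n : ℕ} {M : Matrix (Fin n) (Fin n) ℂ} (hM : M.PosSemidef)
    (x : Fin n → ℂ) : 0 ≤ (star x ⬝ᵥ (M *ᵥ x)).re := by
  have := hM.dotProduct_mulVec_nonneg x
  rw [Complex.le_def] at this
  simpa using this.1

lemma dot_self_re {n : ℕ} (a : Fin n → ℂ) : (star a ⬝ᵥ a).re = ∑ i, ‖a i‖ ^ 2 := by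
  rw [dotProduct, Complex.re_sum]
  refine Finset.sum_congr rfl fun i _ => ?_
  simp [Complex.mul_re, Complex.sq_norm, Complex.normSq_apply]

lemma euclNorm_eq {n : ℕ} (a : Fin n → ℂ) :
    euclNorm a = ‖(WithLp.equiv 2 (Fin n → ℂ)).symm a‖ := by
  rw [euclNorm, dot_self_re, EuclideanSpace.norm_eq]
  rfl

lemma dot_cs {n : ℕ} (a b : Fin n → ℂ) :
    ‖star a ⬝ᵥ b‖ ≤ euclNorm a * euclNorm b := by
  have h1 : star a ⬝ᵥ b
      = inner ℂ ((WithLp.equiv 2 (Fin n → ℂ)).symm a) ((WithLp.equiv 2 (Fin n → ℂ)).symm b) := by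
    simp [dotProduct, inner, mul_comm]
  rw [h1, euclNorm_eq, euclNorm_eq]
  exact norm_inner_le_norm _ _

lemma herm_shift {n : ℕ} {S : Matrix (Fin n) (Fin n) ℂ} (hS : S.IsHermitian)
    (x v : Fin n → ℂ) : star x ⬝ᵥ (S *ᵥ v) = star (S *ᵥ x) ⬝ᵥ v := by
  rw [star_mulVec, dotProduct_mulVec, hS.eq]

open scoped MatrixOrder in
lemma psd_cs {n : ℕ} {M : Matrix (Fin n) (Fin n) ℂ} (hM : M.PosSemidef)
    (x w : Fin n → ℂ) : ‖star x ⬝ᵥ (M *ᵥ w)‖ ≤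
      Real.sqrt (star x ⬝ᵥ (M *ᵥ x)).re * Real.sqrt (star w ⬝ᵥ (M *ᵥ w)).re := by
  have hS : (CFC.sqrt M).PosSemidef := Matrix.nonneg_iff_posSemidef.1 (CFC.sqrt_nonneg M)
  have hsq := CFC.sqrt_mul_sqrt_self M (Matrix.nonneg_iff_posSemidef.2 hM)
  have key : ∀ a b : Fin n → ℂ, star a ⬝ᵥ (M *ᵥ b) = star (CFC.sqrt M *ᵥ a) ⬝ᵥ (CFC.sqrt M *ᵥ b) := by
    intro a b
    conv_lhs => rw [← hsq]
    rw [← mulVec_mulVec, herm_shift hS.1]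
  rw [key x w, key x x, key w w]
  have := dot_cs (CFC.sqrt M *ᵥ x) (CFC.sqrt M *ᵥ w)
  rwa [euclNorm, euclNorm] at this

end Aux

/-- Key differential inequality of the ISS proof: along solutions of
`h' = A(t)h + B(t)u` (FTC form), with `k₁I ⪯ Q(t) ⪯ k₂I`, the uniform Lyapunov LMI
`Q' + QA + AᴴQ ⪯ -2δQ` a.e., and `‖B(t)‖ ≤ M_B` a.e., the Lyapunov function
`V(t) = ½ h(t)ᴴ Q(t) h(t)` satisfies, for a.e. `t ≥ t₀`,
`V' ≤ -2δV + √(2/k₁) k₂ M_B ‖u‖ √V`. -/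
theorem iss_differential_inequality
    (N d : ℕ) (t₀ δ MB k₁ k₂ : ℝ) (hδ : 0 < δ) (hMB : 0 ≤ MB)
    (hk₁ : 0 < k₁) (hk : k₁ ≤ k₂)
    (A Q' Q : ℝ → Matrix (Fin N) (Fin N) ℂ) (B : ℝ → Matrix (Fin N) (Fin d) ℂ)
    (h : ℝ → Fin N → ℂ) (u : ℝ → Fin d → ℂ)
    (hcont : Continuous h) (hQcont : Continuous Q)
    (hherm : ∀ t, (Q t).IsHermitian)
    (hlow : ∀ t, (Q t - (k₁ : ℂ) • (1 : Matrix (Fin N) (Fin N) ℂ)).PosSemidef)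
    (hupp : ∀ t, ((k₂ : ℂ) • (1 : Matrix (Fin N) (Fin N) ℂ) - Q t).PosSemidef)
    (hhint : ∀ (i : Fin N) (t : ℝ), t₀ ≤ t →
      IntervalIntegrable (fun s => (A s *ᵥ h s + B s *ᵥ u s) i) volume t₀ t)
    (hhftc : ∀ (i : Fin N) (t : ℝ), t₀ ≤ t →
      h t i = h t₀ i + ∫ s in t₀..t, (A s *ᵥ h s + B s *ᵥ u s) i)
    (hQ'int : ∀ (i j : Fin N) (t : ℝ), t₀ ≤ t →
      IntervalIntegrable (fun s => Q' s i j) volume t₀ t)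
    (hQftc : ∀ (i j : Fin N) (t : ℝ), t₀ ≤ t →
      Q t i j = Q t₀ i j + ∫ s in t₀..t, Q' s i j)
    (hlmi : ∀ᵐ t ∂(volume.restrict (Set.Ici t₀)),
      (-(Q' t + Q t * A t + (A t)ᴴ * Q t + ((2 * δ : ℝ) : ℂ) • Q t)).PosSemidef)
    (hB : ∀ᵐ t ∂(volume.restrict (Set.Ici t₀)),
      ∀ v : Fin d → ℂ, euclNorm (B t *ᵥ v) ≤ MB * euclNorm v) :
    ∀ᵐ t ∂(volume.restrict (Set.Ici t₀)), ∃ V' : ℝ,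
      HasDerivAt (fun s => 1 / 2 * (star (h s) ⬝ᵥ (Q s *ᵥ h s)).re) V' t ∧
      V' ≤ -2 * δ * (1 / 2 * (star (h t) ⬝ᵥ (Q t *ᵥ h t)).re) +
        Real.sqrt (2 / k₁) * k₂ * MB * euclNorm (u t) *
          Real.sqrt (1 / 2 * (star (h t) ⬝ᵥ (Q t *ᵥ h t)).re) := by
  classical
  have hk₂ : 0 < k₂ := lt_of_lt_of_le hk₁ hk
  set f : ℝ → Fin N → ℂ := fun s => A s *ᵥ h s + B s *ᵥ u s with hfdef
  have hhd : ∀ᵐ t ∂(volume.restrict (Set.Ici t₀)), ∀ i : Fin N,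
      HasDerivAt (fun s => h s i) (f t i) t := by
    rw [ae_all_iff]
    intro i
    exact ae_hasDerivAt_of_ftc t₀ (fun s => h s i) (fun s => f s i) (hhint i) (hhftc i)
  have hQd : ∀ᵐ t ∂(volume.restrict (Set.Ici t₀)), ∀ i j : Fin N,
      HasDerivAt (fun s => Q s i j) (Q' t i j) t := by
    rw [ae_all_iff]
    intro i
    rw [ae_all_iff]
    intro j
    exact ae_hasDerivAt_of_ftc t₀ (fun s => Q s i j) (fun s => Q' s i j)
      (hQ'int i j) (hQftc i j)
  filter_upwards [hhd, hQd, hlmi, hB] with t hhd' hQd' hlmi' hB'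
  -- notation
  set x : Fin N → ℂ := h t with hxdef
  set w : Fin N → ℂ := B t *ᵥ u t with hwdef
  set Mm : Matrix (Fin N) (Fin N) ℂ := Q' t + Q t * A t + (A t)ᴴ * Q t with hMdef
  set D : ℂ := star (f t) ⬝ᵥ (Q t *ᵥ x) + star x ⬝ᵥ (Q' t *ᵥ x) + star x ⬝ᵥ (Q t *ᵥ f t)
    with hDdef
  -- Q t is positive semidefinite
  have hQtPSD : (Q t).PosSemidef := by
    have hdiag : ((k₁ : ℂ) • (1 : Matrix (Fin N) (Fin N) ℂ)).PosSemidef := by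
      have : ((k₁ : ℂ) • (1 : Matrix (Fin N) (Fin N) ℂ))
          = Matrix.diagonal (fun _ => (k₁ : ℂ)) := by
        rw [smul_one_eq_diagonal]
      rw [this]
      refine Matrix.PosSemidef.diagonal fun i => ?_
      simpa using Complex.zero_le_real.2 hk₁.le
    have := (hlow t).add hdiag
    simpa using this
  -- derivative of V
  have hfun : (fun s => star (h s) ⬝ᵥ (Q s *ᵥ h s))
      = fun s => ∑ i, ∑ j, star (h s i) * Q s i j * h s j := by
    funext s
    simp [dotProduct, mulVec, Finset.mul_sum, mul_assoc]
  have hDeq : D = ∑ i, ∑ j, ((star (f t i) * Q t i j + star (h t i) * Q' t i j) * h t j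
      + star (h t i) * Q t i j * f t j) := by
    rw [hDdef]
    simp only [dotProduct, mulVec, Pi.star_apply, Finset.mul_sum, ← Finset.sum_add_distrib]
    refine Finset.sum_congr rfl fun i _ => Finset.sum_congr rfl fun j _ => by ring
  have hW : HasDerivAt (fun s => star (h s) ⬝ᵥ (Q s *ᵥ h s)) D t := by
    rw [hfun, hDeq]
    exact HasDerivAt.fun_sum fun i _ => HasDerivAt.fun_sum fun j _ =>
      ((hhd' i).star.mul (hQd' i j)).mul (hhd' j)
  have hV : HasDerivAt (fun s => 1 / 2 * (star (h s) ⬝ᵥ (Q s *ᵥ h s)).re)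
      (1 / 2 * D.re) t := by
    have := Complex.reCLM.hasFDerivAt.comp_hasDerivAt t hW
    exact this.const_mul _
  refine ⟨1 / 2 * D.re, hV, ?_⟩
  -- split D
  have hsplit : D = star x ⬝ᵥ (Mm *ᵥ x) + (star w ⬝ᵥ (Q t *ᵥ x) + star x ⬝ᵥ (Q t *ᵥ w)) := by
    rw [hDdef, hMdef, hfdef, hwdef]
    simp only [star_add, add_dotProduct, dotProduct_add, Matrix.mulVec_add,
      Matrix.add_mulVec, star_mulVec, Matrix.dotProduct_mulVec, Matrix.vecMul_vecMul,
      Matrix.add_vecMul, Matrix.mulVec_mulVec]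
    abel
  -- swap the cross term
  have hswap : (star w ⬝ᵥ (Q t *ᵥ x)).re = (star x ⬝ᵥ (Q t *ᵥ w)).re := by
    have : star w ⬝ᵥ (Q t *ᵥ x) = star (star x ⬝ᵥ (Q t *ᵥ w)) := by
      rw [herm_shift (hherm t), star_dotProduct]
    rw [this]
    simp
  have hDre : D.re = (star x ⬝ᵥ (Mm *ᵥ x)).re + 2 * (star x ⬝ᵥ (Q t *ᵥ w)).re := by
    rw [hsplit]
    simp [hswap]
    ring
  -- LMI bound
  set P : ℝ := (star x ⬝ᵥ (Q t *ᵥ x)).re with hPdef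
  have hP0 : 0 ≤ P := re_dot_nonneg_of_psd hQtPSD x
  have hMx : (star x ⬝ᵥ (Mm *ᵥ x)).re ≤ -(2 * δ) * P := by
    have h0 := re_dot_nonneg_of_psd hlmi' x
    have hexp : star x ⬝ᵥ ((-(Mm + ((2 * δ : ℝ) : ℂ) • Q t)) *ᵥ x)
        = -(star x ⬝ᵥ (Mm *ᵥ x)) - ((2 * δ : ℝ) : ℂ) * (star x ⬝ᵥ (Q t *ᵥ x)) := by
      rw [Matrix.neg_mulVec, dotProduct_neg, Matrix.add_mulVec, dotProduct_add,
        Matrix.smul_mulVec, dotProduct_smul, smul_eq_mul]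
      ring
    rw [hMdef] at hexp
    rw [show -(Q' t + Q t * A t + (A t)ᴴ * Q t + ((2 * δ : ℝ) : ℂ) • Q t)
        = -((Q' t + Q t * A t + (A t)ᴴ * Q t) + ((2 * δ : ℝ) : ℂ) • Q t) by ring] at hlmi'
    have h0' := re_dot_nonneg_of_psd hlmi' x
    rw [hexp] at h0'
    rw [Complex.sub_re, Complex.neg_re, Complex.re_ofReal_mul] at h0'
    rw [hMdef]
    linarith
  -- Cauchy-Schwarz bound on the input term
  set eu : ℝ := euclNorm (u t) with heudef
  have heu0 : 0 ≤ eu := Real.sqrt_nonneg _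
  set ew : ℝ := euclNorm w with hewdef
  have hew0 : 0 ≤ ew := Real.sqrt_nonneg _
  have hewle : ew ≤ MB * eu := hB' (u t)
  have hww0 : 0 ≤ (star w ⬝ᵥ w).re := by
    rw [dot_self_re]
    exact Finset.sum_nonneg fun i _ => sq_nonneg _
  have hewsq : ew ^ 2 = (star w ⬝ᵥ w).re := by
    rw [hewdef, euclNorm, Real.sq_sqrt hww0]
  have hwQw : (star w ⬝ᵥ (Q t *ᵥ w)).re ≤ k₂ * ew ^ 2 := by
    have h0 := re_dot_nonneg_of_psd (hupp t) w
    have hexp : star w ⬝ᵥ (((k₂ : ℂ) • (1 : Matrix (Fin N) (Fin N) ℂ) - Q t) *ᵥ w)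
        = (k₂ : ℂ) * (star w ⬝ᵥ w) - star w ⬝ᵥ (Q t *ᵥ w) := by
      rw [Matrix.sub_mulVec, dotProduct_sub, Matrix.smul_mulVec, dotProduct_smul,
        smul_eq_mul, Matrix.one_mulVec]
    rw [hexp, Complex.sub_re, Complex.re_ofReal_mul] at h0
    rw [hewsq]
    linarith
  have hR : (star x ⬝ᵥ (Q t *ᵥ w)).re ≤ Real.sqrt P * (Real.sqrt k₂ * (MB * eu)) := by
    calc (star x ⬝ᵥ (Q t *ᵥ w)).re ≤ ‖star x ⬝ᵥ (Q t *ᵥ w)‖ := by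
          exact Complex.re_le_norm _
      _ ≤ Real.sqrt P * Real.sqrt (star w ⬝ᵥ (Q t *ᵥ w)).re := psd_cs hQtPSD x w
      _ ≤ Real.sqrt P * (Real.sqrt k₂ * (MB * eu)) := by
          refine mul_le_mul_of_nonneg_left ?_ (Real.sqrt_nonneg _)
          calc Real.sqrt (star w ⬝ᵥ (Q t *ᵥ w)).re ≤ Real.sqrt (k₂ * ew ^ 2) :=
                Real.sqrt_le_sqrt hwQw
            _ = Real.sqrt k₂ * ew := by
                rw [Real.sqrt_mul hk₂.le, Real.sqrt_sq hew0]
            _ ≤ Real.sqrt k₂ * (MB * eu) :=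
                mul_le_mul_of_nonneg_left hewle (Real.sqrt_nonneg _)
  -- assemble
  have hsqrtP : Real.sqrt P = Real.sqrt 2 * Real.sqrt (1 / 2 * P) := by
    rw [← Real.sqrt_mul (by norm_num : (0:ℝ) ≤ 2)]
    congr 1
    ring
  have hkey : Real.sqrt 2 * Real.sqrt k₂ ≤ Real.sqrt (2 / k₁) * k₂ := by
    have h1 : Real.sqrt 2 * Real.sqrt k₂ = Real.sqrt (2 * k₂) :=
      (Real.sqrt_mul (by norm_num) k₂).symm
    have h2 : Real.sqrt (2 / k₁) * k₂ = Real.sqrt (2 / k₁ * k₂ ^ 2) := by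
      rw [Real.sqrt_mul (by positivity), Real.sqrt_sq hk₂.le]
    rw [h1, h2]
    apply Real.sqrt_le_sqrt
    rw [div_mul_eq_mul_div, le_div_iff₀ hk₁]
    nlinarith [mul_le_mul_of_nonneg_left hk (by positivity : (0:ℝ) ≤ 2 * k₂), sq_nonneg k₂]
  have hfinal : Real.sqrt P * (Real.sqrt k₂ * (MB * eu))
      ≤ Real.sqrt (2 / k₁) * k₂ * MB * eu * Real.sqrt (1 / 2 * P) := by
    rw [hsqrtP]
    have hnn : 0 ≤ MB * eu * Real.sqrt (1 / 2 * P) := by positivity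
    calc Real.sqrt 2 * Real.sqrt (1 / 2 * P) * (Real.sqrt k₂ * (MB * eu))
        = (Real.sqrt 2 * Real.sqrt k₂) * (MB * eu * Real.sqrt (1 / 2 * P)) := by ring
      _ ≤ (Real.sqrt (2 / k₁) * k₂) * (MB * eu * Real.sqrt (1 / 2 * P)) :=
          mul_le_mul_of_nonneg_right hkey hnn
      _ = Real.sqrt (2 / k₁) * k₂ * MB * eu * Real.sqrt (1 / 2 * P) := by ring
  rw [hDre]
  have : -2 * δ * (1 / 2 * P) = 1 / 2 * (-(2 * δ) * P) := by ring
  calc 1 / 2 * ((star x ⬝ᵥ (Mm *ᵥ x)).re + 2 * (star x ⬝ᵥ (Q t *ᵥ w)).re)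
      ≤ 1 / 2 * (-(2 * δ) * P) + Real.sqrt P * (Real.sqrt k₂ * (MB * eu)) := by
        linarith
    _ ≤ -2 * δ * (1 / 2 * P) + Real.sqrt (2 / k₁) * k₂ * MB * eu * Real.sqrt (1 / 2 * P) := by
        rw [this]
        linarith
end
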